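/- arXiv:1912.03937 — 5 statements merged into one kernel-verified Lean document; each statement's English description precedes it below -/
import Mathlib

section
/- Let X be a real normed space and let F_n, F : X → (−∞, ∞] be functionals such that (F_n) Γ-converges to F with respect to weak convergence in X. Let (x_n) be a sequence in X and (δ_n) a sequence of nonnegative reals with δ_n → 0 such that F_n(x_n) ≤ inf_{z ∈ X} F_n(z) + δ_n for all n. If (x_n) converges weakly to some x ∈ X, then x is a minimiser of F, i.e. F(x) = inf_{y ∈ X} F(y). -/
open Filter Topology

/-- A sequence `x` in a normed space weakly converges to `x₀` if `φ (x n) → φ x₀`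
for every continuous linear functional `φ`. -/
def WeaklyConvergesTo {X : Type*} [NormedAddCommGroup X] [NormedSpace ℝ X]
    (x : ℕ → X) (x₀ : X) : Prop :=
  ∀ φ : X →L[ℝ] ℝ, Tendsto (fun n => φ (x n)) atTop (𝓝 (φ x₀))

/-- `Γ`-convergence of a sequence of extended-real-valued functionals with respect to
weak convergence: the liminf inequality and existence of recovery sequences. -/
def GammaConvergesTo {X : Type*} [NormedAddCommGroup X] [NormedSpace ℝ X]
    (F : ℕ → X → EReal) (Flim : X → EReal) : Prop :=
  (∀ (x : X) (xseq : ℕ → X), WeaklyConvergesTo xseq x →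
      Flim x ≤ Filter.liminf (fun n => F n (xseq n)) atTop) ∧
  (∀ x : X, ∃ xseq : ℕ → X, WeaklyConvergesTo xseq x ∧
      Tendsto (fun n => F n (xseq n)) atTop (𝓝 (Flim x)))

theorem EReal.tendsto_add_coe_of_tendsto_zero {α : Type*} {l : Filter α} {f : α → EReal}
    {δ : α → ℝ} {a : EReal} (hf : Tendsto f l (𝓝 a)) (hδ : Tendsto δ l (𝓝 0)) :
    Tendsto (fun n => f n + (δ n : EReal)) l (𝓝 a) := by
  have hadd : ContinuousAt (fun p : EReal × EReal => p.1 + p.2) (a, 0) :=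
    EReal.continuousAt_add (Or.inr EReal.zero_ne_bot) (Or.inr EReal.zero_ne_top)
  simpa [Function.comp_def] using hadd.tendsto.comp (hf.prodMk_nhds (EReal.tendsto_coe.2 hδ))

theorem GammaConvergesTo.liminf_quasi_minimisers_le {X : Type*} [NormedAddCommGroup X]
    [NormedSpace ℝ X] {F : ℕ → X → EReal} {Flim : X → EReal} (hGamma : GammaConvergesTo F Flim)
    {xseq : ℕ → X} {δ : ℕ → ℝ} (hδ : Tendsto δ atTop (𝓝 0))
    (hquasi : ∀ n, F n (xseq n) ≤ (⨅ z : X, F n z) + (δ n : EReal)) (y : X) :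
    liminf (fun n => F n (xseq n)) atTop ≤ Flim y := by
  obtain ⟨yseq, -, hrecovery⟩ := hGamma.2 y
  calc liminf (fun n => F n (xseq n)) atTop
      ≤ liminf (fun n => F n (yseq n) + (δ n : EReal)) atTop :=
        liminf_le_liminf (.of_forall fun n => (hquasi n).trans (by gcongr; exact iInf_le _ _))
    _ = Flim y := (EReal.tendsto_add_coe_of_tendsto_zero hrecovery hδ).liminf_eq

theorem weak_limit_of_quasi_minimisers_is_minimiser_general
    {X : Type*} [NormedAddCommGroup X] [NormedSpace ℝ X]
    (F : ℕ → X → EReal) (Flim : X → EReal)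
    (hGamma : GammaConvergesTo F Flim)
    (xseq : ℕ → X) (δ : ℕ → ℝ)
    (hδ : Tendsto δ atTop (𝓝 0))
    (hquasi : ∀ n, F n (xseq n) ≤ (⨅ z : X, F n z) + (δ n : EReal))
    (x : X) (hx : WeaklyConvergesTo xseq x) :
    Flim x = ⨅ y : X, Flim y :=
  le_antisymm
    (le_iInf fun y => (hGamma.1 x xseq hx).trans (hGamma.liminf_quasi_minimisers_le hδ hquasi y))
    (iInf_le _ x)

theorem weak_limit_of_quasi_minimisers_is_minimiser
    {X : Type*} [NormedAddCommGroup X] [NormedSpace ℝ X]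
    (F : ℕ → X → EReal) (Flim : X → EReal)
    (hFne : ∀ n x, F n x ≠ ⊥) (hFlimne : ∀ x, Flim x ≠ ⊥)
    (hGamma : GammaConvergesTo F Flim)
    (xseq : ℕ → X) (δ : ℕ → ℝ) (hδ0 : ∀ n, 0 ≤ δ n)
    (hδ : Tendsto δ atTop (𝓝 0))
    (hquasi : ∀ n, F n (xseq n) ≤ (⨅ z : X, F n z) + (δ n : EReal))
    (x : X) (hx : WeaklyConvergesTo xseq x) :
    Flim x = ⨅ y : X, Flim y :=
  weak_limit_of_quasi_minimisers_is_minimiser_general F Flim hGamma xseq δ hδ hquasi x hx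
end

section
/- Let X be a real normed space in which every bounded sequence has a weakly convergent subsequence. Let F_n, F : X → (−∞, ∞] be functionals such that (F_n) Γ-converges to F with respect to weak convergence, (F_n) is equi-coercive, inf F < ∞, and F has a unique minimiser x (i.e. F(x) = inf F, and every y ∈ X with F(y) = inf F equals x). Then every sequence (x_n) of quasi-minimisers of (F_n) converges weakly to x. -/
open Filter Topology

open Set

lemma StrictMono.exists_leftInverse_tendsto_atTop {σ : ℕ → ℕ} (hσ : StrictMono σ) :
    ∃ K : ℕ → ℕ, Tendsto K atTop atTop ∧ ∀ k, K (σ k) = k := by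
  refine ⟨fun n => Nat.findGreatest (fun k => σ k ≤ n) n, ?_, fun k => ?_⟩
  · exact tendsto_atTop_atTop.2 fun b =>
      ⟨σ b, fun n hn => Nat.le_findGreatest (hσ.le_apply.trans hn) hn⟩
  · rw [Nat.findGreatest_eq_iff]
    exact ⟨hσ.le_apply, fun _ => le_rfl, fun n hkn _ hle => absurd hle (not_le.2 (hσ hkn))⟩

lemma Bornology.IsBounded.range_of_eventually_mem {α : Type*} [Bornology α] {s : Set α}
    (hs : Bornology.IsBounded s) {x : ℕ → α} (hx : ∀ᶠ n in atTop, x n ∈ s) :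
    Bornology.IsBounded (range x) := by
  obtain ⟨N, hN⟩ := eventually_atTop.1 hx
  refine (((finite_Iio N).image x).isBounded.union hs).subset ?_
  rintro _ ⟨n, rfl⟩
  rcases lt_or_ge n N with h | h
  · exact Or.inl ⟨n, h, rfl⟩
  · exact Or.inr (hN n h)

section

variable {X : Type*} [NormedAddCommGroup X] [NormedSpace ℝ X]

lemma WeaklyConvergesTo.comp_tendsto {x : ℕ → X} {x₀ : X} (hx : WeaklyConvergesTo x x₀)
    {K : ℕ → ℕ} (hK : Tendsto K atTop atTop) : WeaklyConvergesTo (x ∘ K) x₀ :=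
  fun φ => (hx φ).comp hK

lemma WeaklyConvergesTo.of_forall_subseq {x : ℕ → X} {x₀ : X}
    (h : ∀ σ : ℕ → ℕ, StrictMono σ → ∃ ψ : ℕ → ℕ, WeaklyConvergesTo (x ∘ σ ∘ ψ) x₀) :
    WeaklyConvergesTo x x₀ := by
  intro φ
  refine tendsto_of_subseq_tendsto fun ns hns => ?_
  obtain ⟨μ, -, hμ⟩ := strictMono_subseq_of_tendsto_atTop hns
  obtain ⟨ψ, hψ⟩ := h _ hμ
  exact ⟨μ ∘ ψ, hψ φ⟩

namespace GammaConvergesTo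

variable {F : ℕ → X → EReal} {Flim : X → EReal}

theorem comp_strictMono (hΓ : GammaConvergesTo F Flim) {σ : ℕ → ℕ} (hσ : StrictMono σ) :
    GammaConvergesTo (F ∘ σ) Flim := by
  refine ⟨fun x₀ y hy => ?_, fun x₀ => ?_⟩
  · obtain ⟨K, hK, hKσ⟩ := hσ.exists_leftInverse_tendsto_atTop
    -- The liminf inequality concerns full sequences, so spread `y` out along `σ` first.
    calc Flim x₀ ≤ liminf (fun n => F n (y (K n))) atTop := hΓ.1 x₀ _ (hy.comp_tendsto hK)
      _ ≤ liminf (fun k => F (σ k) (y (K (σ k)))) atTop :=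
        hσ.tendsto_atTop.liminf_le_liminf_comp
      _ = liminf (fun k => (F ∘ σ) k (y k)) atTop := by simp only [hKσ, Function.comp_apply]
  · obtain ⟨y, hy, hFy⟩ := hΓ.2 x₀
    exact ⟨y ∘ σ, hy.comp_tendsto hσ.tendsto_atTop, hFy.comp hσ.tendsto_atTop⟩

variable {xseq : ℕ → X} {δ : ℕ → ℝ}

theorem limsup_le_iInf_of_quasiMin (hΓ : GammaConvergesTo F Flim)
    (hδ : Tendsto δ atTop (𝓝 0)) (hquasi : ∀ n, F n (xseq n) ≤ (⨅ z, F n z) + (δ n : EReal)) :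
    limsup (fun n => F n (xseq n)) atTop ≤ ⨅ y, Flim y := by
  refine le_iInf fun y => ?_
  obtain ⟨yseq, -, hFy⟩ := hΓ.2 y
  have hbound : Tendsto (fun n => F n (yseq n) + (δ n : EReal)) atTop (𝓝 (Flim y + 0)) :=
    (EReal.continuousAt_add (p := (Flim y, 0)) (Or.inr EReal.zero_ne_bot)
      (Or.inr EReal.zero_ne_top)).tendsto.comp (hFy.prodMk_nhds (EReal.tendsto_coe.2 hδ))
  calc limsup (fun n => F n (xseq n)) atTop
      ≤ limsup (fun n => F n (yseq n) + (δ n : EReal)) atTop :=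
        limsup_le_limsup (Eventually.of_forall fun n =>
          (hquasi n).trans (add_le_add_left (iInf_le _ _) _))
    _ = Flim y := by rw [hbound.limsup_eq, add_zero]

theorem isBounded_range_of_quasiMin (hΓ : GammaConvergesTo F Flim)
    (hcoercive : ∀ r : ℝ, Bornology.IsBounded (⋃ n : ℕ, {x : X | F n x ≤ (r : EReal)}))
    (hinf : (⨅ y, Flim y) < ⊤) (hδ : Tendsto δ atTop (𝓝 0))
    (hquasi : ∀ n, F n (xseq n) ≤ (⨅ z, F n z) + (δ n : EReal)) :
    Bornology.IsBounded (range xseq) := by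
  obtain ⟨c, hc, -⟩ := EReal.exists_between_coe_real hinf
  have hlt : ∀ᶠ n in atTop, F n (xseq n) < c :=
    eventually_lt_of_limsup_lt ((hΓ.limsup_le_iInf_of_quasiMin hδ hquasi).trans_lt hc)
  exact (hcoercive c).range_of_eventually_mem
    (hlt.mono fun n hn => mem_iUnion.2 ⟨n, hn.le⟩)

theorem eq_iInf_of_quasiMin_of_weaklyConvergesTo (hΓ : GammaConvergesTo F Flim)
    (hδ : Tendsto δ atTop (𝓝 0)) (hquasi : ∀ n, F n (xseq n) ≤ (⨅ z, F n z) + (δ n : EReal))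
    {x₀ : X} (hx₀ : WeaklyConvergesTo xseq x₀) :
    Flim x₀ = ⨅ y, Flim y :=
  le_antisymm ((hΓ.1 x₀ xseq hx₀).trans
    (le_trans liminf_le_limsup (hΓ.limsup_le_iInf_of_quasiMin hδ hquasi))) (iInf_le _ x₀)

end GammaConvergesTo

end

theorem quasi_minimisers_converge_weakly_to_unique_minimiser_general
    {X : Type*} [NormedAddCommGroup X] [NormedSpace ℝ X]
    (hcompact : ∀ x : ℕ → X, Bornology.IsBounded (Set.range x) →
      ∃ (φ : ℕ → ℕ) (x₀ : X), StrictMono φ ∧ WeaklyConvergesTo (x ∘ φ) x₀)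
    (F : ℕ → X → EReal) (Flim : X → EReal)
    (hGamma : GammaConvergesTo F Flim)
    (hcoercive : ∀ r : ℝ, Bornology.IsBounded (⋃ n : ℕ, {x : X | F n x ≤ (r : EReal)}))
    (hinf : (⨅ y : X, Flim y) < ⊤)
    (x : X)
    (hxuniq : ∀ y : X, Flim y = (⨅ z : X, Flim z) → y = x)
    (xseq : ℕ → X) (δ : ℕ → ℝ)
    (hδ : Tendsto δ atTop (𝓝 0))
    (hquasi : ∀ n, F n (xseq n) ≤ (⨅ z : X, F n z) + (δ n : EReal)) :
    WeaklyConvergesTo xseq x := by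
  have hbdd := hGamma.isBounded_range_of_quasiMin hcoercive hinf hδ hquasi
  refine WeaklyConvergesTo.of_forall_subseq fun σ hσ => ?_
  obtain ⟨ψ, x₀, hψ, hx₀⟩ := hcompact (xseq ∘ σ) (hbdd.subset (range_comp_subset_range σ xseq))
  have hτ : StrictMono (σ ∘ ψ) := hσ.comp hψ
  have hmin : Flim x₀ = ⨅ y, Flim y :=
    (hGamma.comp_strictMono hτ).eq_iInf_of_quasiMin_of_weaklyConvergesTo (xseq := xseq ∘ σ ∘ ψ)
      (hδ.comp hτ.tendsto_atTop) (fun n => hquasi _) hx₀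
  exact ⟨ψ, hxuniq x₀ hmin ▸ hx₀⟩

theorem quasi_minimisers_converge_weakly_to_unique_minimiser
    {X : Type*} [NormedAddCommGroup X] [NormedSpace ℝ X]
    (hcompact : ∀ x : ℕ → X, Bornology.IsBounded (Set.range x) →
      ∃ (φ : ℕ → ℕ) (x₀ : X), StrictMono φ ∧ WeaklyConvergesTo (x ∘ φ) x₀)
    (F : ℕ → X → EReal) (Flim : X → EReal)
    (hFne : ∀ n x, F n x ≠ ⊥) (hFlimne : ∀ x, Flim x ≠ ⊥)
    (hGamma : GammaConvergesTo F Flim)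
    (hcoercive : ∀ r : ℝ, Bornology.IsBounded (⋃ n : ℕ, {x : X | F n x ≤ (r : EReal)}))
    (hinf : (⨅ y : X, Flim y) < ⊤)
    (x : X) (hxmin : Flim x = ⨅ y : X, Flim y)
    (hxuniq : ∀ y : X, Flim y = (⨅ z : X, Flim z) → y = x)
    (xseq : ℕ → X) (δ : ℕ → ℝ) (hδ0 : ∀ n, 0 ≤ δ n)
    (hδ : Tendsto δ atTop (𝓝 0))
    (hquasi : ∀ n, F n (xseq n) ≤ (⨅ z : X, F n z) + (δ n : EReal)) :
    WeaklyConvergesTo xseq x :=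
  quasi_minimisers_converge_weakly_to_unique_minimiser_general hcompact F Flim hGamma hcoercive hinf
    x hxuniq xseq δ hδ hquasi
end

section
/- (Abstract Poincaré inequality.) Let X and Y be real normed spaces, T : X → Y a continuous linear map, and N : X → ℝ another norm on X (N x ≥ 0; N x = 0 iff x = 0; N(x + y) ≤ N x + N y; N(c • x) = |c| N x) such that the norm of X decomposes as ‖x‖_X = N(x) + ‖T x‖_Y for all x ∈ X. Assume that every bounded sequence in X has a weakly convergent subsequence, and that the identity maps weakly convergent sequences to N-convergent ones: whenever (x_n) converges weakly to x in X, N(x_n − x) → 0. Let M ⊆ X be weakly sequentially closed (if x_n ∈ M for all n and (x_n) converges weakly to x, then x ∈ M) and star-shaped with center 0 (for every x ∈ M and t ∈ [0,1], t • x ∈ M). Then the set ker(T) ∩ M is bounded in X if and only if there exists a constant C ≥ 0 such that N(x) ≤ C(‖T x‖_Y + 1) for all x ∈ M. -/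
/-!
If no constant `C` works, rescaling counterexamples inside the star-shaped set `M` gives, for any
fixed `S > 0`, points `yₙ ∈ M` with `N yₙ = S` and `T yₙ → 0`. These are bounded, so a subsequence
converges weakly to some `y₀`: weak sequential closedness puts `y₀` in `M`, weak continuity of `T`
gives `T y₀ = 0`, and since the weak convergence is also `N`-convergence, `N y₀ = S`. So
`ker T ∩ M` contains points of norm `S` for every `S`. Conversely `‖x‖ = N x ≤ C` on `ker T ∩ M`.
-/

open Filter Topology

namespace WeaklyConvergesTo

variable {X Y : Type*} [NormedAddCommGroup X] [NormedSpace ℝ X]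
  [NormedAddCommGroup Y] [NormedSpace ℝ Y] {x : ℕ → X} {x₀ x₁ : X}

theorem of_tendsto (h : Tendsto x atTop (𝓝 x₀)) : WeaklyConvergesTo x x₀ :=
  fun φ => (φ.continuous.tendsto x₀).comp h

theorem map (h : WeaklyConvergesTo x x₀) (T : X →L[ℝ] Y) :
    WeaklyConvergesTo (fun n => T (x n)) (T x₀) :=
  fun φ => h (φ.comp T)

theorem unique (h₀ : WeaklyConvergesTo x x₀) (h₁ : WeaklyConvergesTo x x₁) : x₀ = x₁ := by
  refine sub_eq_zero.mp (SeparatingDual.eq_zero_of_forall_dual_eq_zero (R := ℝ) fun φ => ?_)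
  rw [map_sub, tendsto_nhds_unique (h₀ φ) (h₁ φ), sub_self]

end WeaklyConvergesTo

theorem Seminorm.tendsto_of_tendsto_sub {𝕜 E ι : Type*} [SeminormedRing 𝕜] [AddCommGroup E]
    [Module 𝕜 E] (p : Seminorm 𝕜 E) {l : Filter ι} {x : ι → E} {x₀ : E}
    (h : Tendsto (fun i => p (x i - x₀)) l (𝓝 0)) : Tendsto (fun i => p (x i)) l (𝓝 (p x₀)) :=
  tendsto_iff_norm_sub_tendsto_zero.2 <|
    squeeze_zero (fun _ => norm_nonneg _) (fun _ => p.norm_sub_map_le_sub _ _) h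

section Poincare

variable {X Y : Type*} [NormedAddCommGroup X] [NormedSpace ℝ X]
  [NormedAddCommGroup Y] [NormedSpace ℝ Y] (T : X →L[ℝ] Y) (p : Seminorm ℝ X) {M : Set X}

theorem exists_smul_mem_seminorm_eq (hM : StarConvex ℝ 0 M) {S C : ℝ} (hS : 0 < S)
    (hSC : S ≤ C) {x : X} (hxM : x ∈ M) (hx : C * (‖T x‖ + 1) < p x) :
    ∃ y ∈ M, p y = S ∧ ‖T y‖ ≤ S / C := by
  have hC : 0 < C := hS.trans_le hSC
  have hCx : C ≤ C * (‖T x‖ + 1) := le_mul_of_one_le_right hC.le (by simp)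
  have hpx : 0 < p x := by linarith
  refine ⟨(S / p x) • x, hM.smul_mem hxM (by positivity) ((div_le_one hpx).2 (by linarith)), ?_, ?_⟩
  · rw [map_smul_eq_mul, Real.norm_of_nonneg (by positivity), div_mul_cancel₀ _ hpx.ne']
  · rw [map_smul, norm_smul, Real.norm_of_nonneg (by positivity), div_mul_eq_mul_div,
      div_le_div_iff₀ hpx hC]
    nlinarith

variable (hnorm : ∀ x, ‖x‖ = p x + ‖T x‖)
  (hcompact : ∀ x : ℕ → X, Bornology.IsBounded (Set.range x) →
    ∃ (φ : ℕ → ℕ) (x₀ : X), StrictMono φ ∧ WeaklyConvergesTo (x ∘ φ) x₀)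
  (hpweak : ∀ (x : ℕ → X) (x₀ : X), WeaklyConvergesTo x x₀ →
    Tendsto (fun n => p (x n - x₀)) atTop (𝓝 0))
  (hMclosed : ∀ (x : ℕ → X) (x₀ : X), (∀ n, x n ∈ M) → WeaklyConvergesTo x x₀ → x₀ ∈ M)
include hnorm hcompact hpweak hMclosed

theorem exists_mem_ker_inter_seminorm_eq {y : ℕ → X} (hyM : ∀ n, y n ∈ M) {S : ℝ}
    (hpy : ∀ n, p (y n) = S) (hTy : Tendsto (fun n => T (y n)) atTop (𝓝 0)) :
    ∃ y₀ ∈ {x | T x = 0} ∩ M, p y₀ = S := by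
  have hbdd : Bornology.IsBounded (Set.range y) := by
    obtain ⟨r, hr⟩ := isBounded_iff_forall_norm_le.1 (Metric.isBounded_range_of_tendsto _ hTy)
    refine isBounded_iff_forall_norm_le.2 ⟨S + r, ?_⟩
    rintro _ ⟨n, rfl⟩
    rw [hnorm, hpy]
    gcongr
    exact hr _ ⟨n, rfl⟩
  obtain ⟨φ, y₀, hφ, hweak⟩ := hcompact y hbdd
  have hTy₀ : T y₀ = 0 :=
    (hweak.map T).unique (.of_tendsto (hTy.comp hφ.tendsto_atTop))
  have hpy₀ : p y₀ = S :=
    tendsto_nhds_unique (p.tendsto_of_tendsto_sub (hpweak _ _ hweak))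
      (by simp only [Function.comp_apply, hpy, tendsto_const_nhds])
  exact ⟨y₀, ⟨hTy₀, hMclosed _ _ (fun n => hyM (φ n)) hweak⟩, hpy₀⟩

theorem exists_seminorm_le_of_isBounded_ker_inter (hM : StarConvex ℝ 0 M)
    (hbdd : Bornology.IsBounded ({x | T x = 0} ∩ M)) :
    ∃ C, 0 ≤ C ∧ ∀ x ∈ M, p x ≤ C * (‖T x‖ + 1) := by
  obtain ⟨R, hR⟩ := isBounded_iff_forall_norm_le.1 hbdd
  set S := max R 0 + 1
  have hS : 0 < S := by positivity
  by_contra! h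
  have hsmall : ∀ n : ℕ, ∃ y ∈ M, p y = S ∧ ‖T y‖ ≤ 1 / (n + 1) := fun n => by
    obtain ⟨x, hxM, hx⟩ := h (S * (n + 1)) (by positivity)
    have hSC : S ≤ S * (n + 1) := le_mul_of_one_le_right hS.le (by simp)
    simpa only [div_mul_cancel_left₀ hS.ne', one_div] using
      exists_smul_mem_seminorm_eq T p hM hS hSC hxM hx
  choose y hyM hpy hTy using hsmall
  obtain ⟨y₀, hy₀, hpy₀⟩ := exists_mem_ker_inter_seminorm_eq T p hnorm hcompact hpweak hMclosed
    hyM hpy (squeeze_zero_norm hTy tendsto_one_div_add_atTop_nhds_zero_nat)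
  have := hR y₀ hy₀
  rw [hnorm, hpy₀, show T y₀ = 0 from hy₀.1, norm_zero, add_zero] at this
  linarith [le_max_left R 0]

end Poincare

theorem abstract_poincare_general
    {X Y : Type*} [NormedAddCommGroup X] [NormedSpace ℝ X]
    [NormedAddCommGroup Y] [NormedSpace ℝ Y]
    (T : X →L[ℝ] Y) (N : X → ℝ)
    (hNadd : ∀ x y : X, N (x + y) ≤ N x + N y)
    (hNsmul : ∀ (c : ℝ) (x : X), N (c • x) = |c| * N x)
    (hnorm : ∀ x : X, ‖x‖ = N x + ‖T x‖)
    (hcompact : ∀ x : ℕ → X, Bornology.IsBounded (Set.range x) →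
      ∃ (φ : ℕ → ℕ) (x₀ : X), StrictMono φ ∧ WeaklyConvergesTo (x ∘ φ) x₀)
    (hNweak : ∀ (x : ℕ → X) (x₀ : X), WeaklyConvergesTo x x₀ →
      Tendsto (fun n => N (x n - x₀)) atTop (𝓝 0))
    (M : Set X)
    (hMclosed : ∀ (x : ℕ → X) (x₀ : X), (∀ n, x n ∈ M) → WeaklyConvergesTo x x₀ → x₀ ∈ M)
    (hMstar : ∀ x ∈ M, ∀ t : ℝ, t ∈ Set.Icc (0 : ℝ) 1 → t • x ∈ M) :
    Bornology.IsBounded ({x : X | T x = 0} ∩ M) ↔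
      ∃ C : ℝ, 0 ≤ C ∧ ∀ x ∈ M, N x ≤ C * (‖T x‖ + 1) := by
  let p : Seminorm ℝ X := .of N hNadd fun c x => by rw [hNsmul, Real.norm_eq_abs]
  have hM : StarConvex ℝ 0 M := starConvex_zero_iff.2 fun x hx t ht₀ ht₁ => hMstar x hx t ⟨ht₀, ht₁⟩
  refine ⟨exists_seminorm_le_of_isBounded_ker_inter T p hnorm hcompact hNweak hMclosed hM,
    fun ⟨C, _, hC⟩ => isBounded_iff_forall_norm_le.2 ⟨C, fun x ⟨hTx, hxM⟩ => ?_⟩⟩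
  simpa [hnorm x, show T x = 0 from hTx] using hC x hxM

theorem abstract_poincare
    {X Y : Type*} [NormedAddCommGroup X] [NormedSpace ℝ X]
    [NormedAddCommGroup Y] [NormedSpace ℝ Y]
    (T : X →L[ℝ] Y) (N : X → ℝ)
    (hN0 : ∀ x : X, 0 ≤ N x)
    (hNeq : ∀ x : X, N x = 0 ↔ x = 0)
    (hNadd : ∀ x y : X, N (x + y) ≤ N x + N y)
    (hNsmul : ∀ (c : ℝ) (x : X), N (c • x) = |c| * N x)
    (hnorm : ∀ x : X, ‖x‖ = N x + ‖T x‖)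
    (hcompact : ∀ x : ℕ → X, Bornology.IsBounded (Set.range x) →
      ∃ (φ : ℕ → ℕ) (x₀ : X), StrictMono φ ∧ WeaklyConvergesTo (x ∘ φ) x₀)
    (hNweak : ∀ (x : ℕ → X) (x₀ : X), WeaklyConvergesTo x x₀ →
      Tendsto (fun n => N (x n - x₀)) atTop (𝓝 0))
    (M : Set X)
    (hMclosed : ∀ (x : ℕ → X) (x₀ : X), (∀ n, x n ∈ M) → WeaklyConvergesTo x x₀ → x₀ ∈ M)
    (hMstar : ∀ x ∈ M, ∀ t : ℝ, t ∈ Set.Icc (0 : ℝ) 1 → t • x ∈ M) :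
    Bornology.IsBounded ({x : X | T x = 0} ∩ M) ↔
      ∃ C : ℝ, 0 ≤ C ∧ ∀ x ∈ M, N x ≤ C * (‖T x‖ + 1) :=
  abstract_poincare_general T N hNadd hNsmul hnorm hcompact hNweak M hMclosed hMstar
end

section
/- (Abstract Γ-convergence.) Let X and B be real normed spaces, γ : X → B a continuous linear map, X₀ := ker(γ), and f : X → ℝ a continuous linear functional. Let (A_n) be an increasing sequence of subsets of X (A_n ⊆ A_{n+1} for all n) such that ⋃_{n ∈ ℕ} (A_n ∩ X₀) is dense in X₀ with respect to the norm topology. Let E : X → ℝ be bounded from below, weakly sequentially lower semicontinuous (E(x) ≤ liminf E(x_n) whenever x_n converges weakly to x), and norm-continuous. Define F_n : X → (−∞, ∞] by F_n(x) = E(x) + n ‖γ(x)‖_B² − f(x) if x ∈ A_n and F_n(x) = ∞ otherwise, and define F : X → (−∞, ∞] by F(x) = E(x) − f(x) if x ∈ X₀ and F(x) = ∞ otherwise. Then (F_n) Γ-converges to F with respect to weak convergence in X. -/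
open Filter Topology

/-! Off the kernel of `γ` the penalty `n ‖γ xₙ‖²` blows up along every weakly convergent
sequence, because the norm is weakly lower semicontinuous (Hahn–Banach); on the kernel the
penalty is nonnegative, so the liminf inequality reduces to that of `E - f`. Recovery
sequences for kernel points come from the density assumption: a norm-approximating sequence
drawn from `⋃ₙ (Aₙ ∩ ker γ)` can be slowed down so that its `n`-th term lies in `Aₙ`, where
the penalty vanishes. -/

theorem exists_tendsto_atTop_eventually_comp_le (m : ℕ → ℕ) :
    ∃ s : ℕ → ℕ, Tendsto s atTop atTop ∧ ∀ᶠ n in atTop, m (s n) ≤ n := by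
  refine ⟨fun n => Nat.findGreatest (fun k => m k ≤ n) n, ?_, ?_⟩
  · refine tendsto_atTop.2 fun K => ?_
    filter_upwards [eventually_ge_atTop (max K (m K))] with n hn
    exact Nat.le_findGreatest (le_of_max_le_left hn) (le_of_max_le_right hn)
  · filter_upwards [eventually_ge_atTop (m 0)] with n hn
    exact Nat.findGreatest_spec (P := fun k => m k ≤ n) (Nat.zero_le n) hn

theorem Monotone.exists_seq_tendsto_of_mem_closure_iUnion {X : Type*} [TopologicalSpace X]
    [FrechetUrysohnSpace X] {A : ℕ → Set X} (hA : Monotone A) {x : X}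
    (hx : x ∈ closure (⋃ n, A n)) :
    ∃ y : ℕ → X, Tendsto y atTop (𝓝 x) ∧ ∀ᶠ n in atTop, y n ∈ A n := by
  obtain ⟨z, hzA, hz⟩ := mem_closure_iff_seq_limit.1 hx
  choose m hm using fun k => Set.mem_iUnion.1 (hzA k)
  obtain ⟨s, hs, hms⟩ := exists_tendsto_atTop_eventually_comp_le m
  exact ⟨z ∘ s, hz.comp hs, hms.mono fun n hn => hA hn (hm (s n))⟩

theorem tendsto_add_natCast_mul_atTop {a b : ℕ → ℝ} {c δ : ℝ} (hδ : 0 < δ)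
    (ha : ∀ᶠ n in atTop, c ≤ a n) (hb : ∀ᶠ n in atTop, δ ≤ b n) :
    Tendsto (fun n => a n + n * b n) atTop atTop :=
  tendsto_atTop_add_left_of_le' _ c ha <|
    tendsto_atTop_mono' _ (hb.mono fun n h => mul_le_mul_of_nonneg_left h n.cast_nonneg)
      (tendsto_natCast_atTop_atTop.atTop_mul_const hδ)

theorem EReal.coe_sub_le_liminf_of_tendsto {u v : ℕ → ℝ} {a b : ℝ}
    (hu : (a : EReal) ≤ liminf (fun n => (u n : EReal)) atTop) (hv : Tendsto v atTop (𝓝 b)) :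
    ((a - b : ℝ) : EReal) ≤ liminf (fun n => ((u n - v n : ℝ) : EReal)) atTop := by
  have hv' : liminf (fun n => ((-v n : ℝ) : EReal)) atTop = ((-b : ℝ) : EReal) :=
    (EReal.tendsto_coe.2 hv.neg).liminf_eq
  calc ((a - b : ℝ) : EReal) = (a : EReal) + ((-b : ℝ) : EReal) := by
        rw [sub_eq_add_neg, EReal.coe_add]
    _ ≤ liminf (fun n => (u n : EReal)) atTop + liminf (fun n => ((-v n : ℝ) : EReal)) atTop :=
        add_le_add hu hv'.ge
    _ ≤ liminf ((fun n => (u n : EReal)) + fun n => ((-v n : ℝ) : EReal)) atTop :=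
        EReal.le_liminf_add
    _ = liminf (fun n => ((u n - v n : ℝ) : EReal)) atTop := by
        simp only [Pi.add_def, ← EReal.coe_add, ← sub_eq_add_neg]

section WeakConvergence

variable {X Y : Type*} [NormedAddCommGroup X] [NormedSpace ℝ X]
  [NormedAddCommGroup Y] [NormedSpace ℝ Y]

theorem Filter.Tendsto.weaklyConvergesTo {x : ℕ → X} {x₀ : X}
    (hx : Tendsto x atTop (𝓝 x₀)) : WeaklyConvergesTo x x₀ :=
  fun φ => (φ.continuous.tendsto x₀).comp hx

theorem WeaklyConvergesTo.map_s6 {x : ℕ → X} {x₀ : X} (hx : WeaklyConvergesTo x x₀)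
    (T : X →L[ℝ] Y) : WeaklyConvergesTo (fun n => T (x n)) (T x₀) :=
  fun φ => hx (φ.comp T)

theorem WeaklyConvergesTo.eventually_lt_norm {y : ℕ → Y} {y₀ : Y}
    (hy : WeaklyConvergesTo y y₀) {r : ℝ} (hr : r < ‖y₀‖) : ∀ᶠ n in atTop, r < ‖y n‖ := by
  obtain ⟨ψ, hψ_norm, hψ_y₀⟩ := exists_dual_vector'' ℝ y₀
  have hψ : Tendsto (fun n => ψ (y n)) atTop (𝓝 ‖y₀‖) := by simpa [hψ_y₀] using hy ψ
  filter_upwards [hψ.eventually_const_lt hr] with n hn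
  calc r < ψ (y n) := hn
    _ ≤ ‖ψ‖ * ‖y n‖ := (le_abs_self _).trans (ψ.le_opNorm _)
    _ ≤ ‖y n‖ := mul_le_of_le_one_left (norm_nonneg _) hψ_norm

theorem tendsto_penalty_atTop_of_map_ne_zero (γ : X →L[ℝ] Y) (f : X →L[ℝ] ℝ) {E : X → ℝ}
    {c : ℝ} (hE : ∀ x, c ≤ E x)
    {x : ℕ → X} {x₀ : X} (hx : WeaklyConvergesTo x x₀) (hγ : γ x₀ ≠ 0) :
    Tendsto (fun n : ℕ => E (x n) - f (x n) + n * ‖γ (x n)‖ ^ 2) atTop atTop := by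
  have hγ_pos : 0 < ‖γ x₀‖ := norm_pos_iff.2 hγ
  refine tendsto_add_natCast_mul_atTop (c := c - (f x₀ + 1)) (pow_pos (half_pos hγ_pos) 2) ?_ ?_
  · filter_upwards [(hx f).eventually_lt_const (lt_add_one _)] with n hn
    linarith [hE (x n)]
  · filter_upwards [(hx.map_s6 γ).eventually_lt_norm (half_lt_self hγ_pos)] with n hn
    exact pow_le_pow_left₀ (by positivity) hn.le 2

end WeakConvergence

theorem abstract_gamma_convergence
    {X B : Type*} [NormedAddCommGroup X] [NormedSpace ℝ X]
    [NormedAddCommGroup B] [NormedSpace ℝ B]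
    (γ : X →L[ℝ] B) (f : X →L[ℝ] ℝ)
    (A : ℕ → Set X) (hAmono : ∀ n, A n ⊆ A (n + 1))
    (hdense : {x : X | γ x = 0} ⊆ closure (⋃ n : ℕ, A n ∩ {x : X | γ x = 0}))
    (E : X → ℝ)
    (hEbdd : ∃ c : ℝ, ∀ x : X, c ≤ E x)
    (hElsc : ∀ (x : X) (xseq : ℕ → X), WeaklyConvergesTo xseq x →
      (E x : EReal) ≤ Filter.liminf (fun n => ((E (xseq n) : ℝ) : EReal)) atTop)
    (hEcont : Continuous E)
    (F : ℕ → X → EReal) (Flim : X → EReal)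
    (hFmem : ∀ (n : ℕ) (x : X), x ∈ A n →
      F n x = ((E x + (n : ℝ) * ‖γ x‖ ^ 2 - f x : ℝ) : EReal))
    (hFnotmem : ∀ (n : ℕ) (x : X), x ∉ A n → F n x = ⊤)
    (hFlimmem : ∀ x : X, γ x = 0 → Flim x = ((E x - f x : ℝ) : EReal))
    (hFlimnotmem : ∀ x : X, γ x ≠ 0 → Flim x = ⊤) :
    GammaConvergesTo F Flim := by
  obtain ⟨c, hc⟩ := hEbdd
  have hF_ge : ∀ (n : ℕ) x, ((E x - f x + n * ‖γ x‖ ^ 2 : ℝ) : EReal) ≤ F n x := fun n x => by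
    by_cases hx : x ∈ A n
    · rw [hFmem n x hx, add_sub_right_comm]
    · rw [hFnotmem n x hx]; exact le_top
  have hF_top : ∀ (x₀ : X) (x : ℕ → X), γ x₀ ≠ 0 → WeaklyConvergesTo x x₀ →
      Tendsto (fun n => F n (x n)) atTop (𝓝 ⊤) := fun x₀ x hγ hx =>
    tendsto_nhds_top_mono (EReal.tendsto_coe_nhds_top_iff.2
      (tendsto_penalty_atTop_of_map_ne_zero γ f hc hx hγ)) (Eventually.of_forall (hF_ge · _))
  refine ⟨fun x₀ x hx => ?_, fun x₀ => ?_⟩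
  · rcases eq_or_ne (γ x₀) 0 with hγ | hγ
    · rw [hFlimmem x₀ hγ]
      refine (EReal.coe_sub_le_liminf_of_tendsto (hElsc x₀ x hx) (hx f)).trans <|
        liminf_le_liminf (Eventually.of_forall fun n => le_trans ?_ (hF_ge n (x n)))
      exact EReal.coe_le_coe_iff.2 (le_add_of_nonneg_right (by positivity))
    · rw [hFlimnotmem x₀ hγ, (hF_top x₀ x hγ hx).liminf_eq]
  · rcases eq_or_ne (γ x₀) 0 with hγ | hγ
    · have hA : Monotone fun n => A n ∩ {x : X | γ x = 0} :=
        monotone_nat_of_le_succ fun n => Set.inter_subset_inter_left _ (hAmono n)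
      obtain ⟨x, hx, hxA⟩ := hA.exists_seq_tendsto_of_mem_closure_iUnion (hdense hγ)
      refine ⟨x, hx.weaklyConvergesTo, ?_⟩
      rw [hFlimmem x₀ hγ]
      refine (EReal.tendsto_coe.2 (((hEcont.tendsto x₀).comp hx).sub
        ((f.continuous.tendsto x₀).comp hx))).congr' ?_
      filter_upwards [hxA] with n ⟨hn, hker⟩
      simp [hFmem n _ hn, show γ (x n) = 0 from hker]
    · refine ⟨fun _ => x₀, tendsto_const_nhds.weaklyConvergesTo, ?_⟩
      rw [hFlimnotmem x₀ hγ]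
      exact hF_top x₀ _ hγ tendsto_const_nhds.weaklyConvergesTo
end

section
/- Let X be a real normed space in which every bounded sequence has a weakly convergent subsequence, and let F_n, F : X → (−∞, ∞] be functionals such that (F_n) Γ-converges to F with respect to weak convergence, (F_n) is equi-coercive, and inf F < ∞. Then F attains its infimum, and every sequence (x_n) of quasi-minimisers of (F_n) has a subsequence that converges weakly to some minimiser of F. -/
open Filter Topology

/-!
Recovery sequences give `limsup (⨅ F n) ≤ ⨅ F`, so quasi-minimisers (and near-minimisers, which
always exist) satisfy `limsup F n (x n) ≤ ⨅ F < ⊤`. By equi-coercivity such a sequence is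
bounded, hence has a weakly convergent subsequence, and the liminf inequality bounds `F` at its
limit by `⨅ F`. The liminf inequality is only assumed for whole sequences; along a subsequence
it follows by filling the gaps with a recovery sequence for the limit point.
-/

open Set

theorem StrictMono.atTop_inf_principal_range_le_map {φ : ℕ → ℕ} (hφ : StrictMono φ) :
    atTop ⊓ 𝓟 (range φ) ≤ map φ atTop := by
  intro s hs
  obtain ⟨K, hK⟩ := mem_atTop_sets.1 (mem_map.1 hs)
  refine mem_inf_principal.2 (mem_atTop_sets.2 ⟨φ K, ?_⟩)
  rintro _ hn ⟨k, rfl⟩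
  exact hK k (hφ.le_iff_le.1 hn)

theorem Filter.Tendsto.piecewise_range_of_strictMono {α : Type*} [TopologicalSpace α]
    {u r : ℕ → α} {φ : ℕ → ℕ} {a : α} [∀ n, Decidable (n ∈ range φ)] (hφ : StrictMono φ)
    (hu : Tendsto (u ∘ φ) atTop (𝓝 a)) (hr : Tendsto r atTop (𝓝 a)) :
    Tendsto ((range φ).piecewise u r) atTop (𝓝 a) :=
  Tendsto.piecewise ((tendsto_map'_iff.2 hu).mono_left hφ.atTop_inf_principal_range_le_map)
    (tendsto_inf_left hr)

theorem EReal.limsup_le_limsup_of_le_add {α : Type*} {l : Filter α} [l.NeBot]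
    {f g : α → EReal} {ε : α → ℝ} (h : ∀ a, f a ≤ g a + ε a) (hε : Tendsto ε l (𝓝 0)) :
    limsup f l ≤ limsup g l := by
  have hε' : limsup (fun a => (ε a : EReal)) l = 0 := (EReal.tendsto_coe.2 hε).limsup_eq
  calc limsup f l ≤ limsup (g + fun a => (ε a : EReal)) l := limsup_le_limsup (.of_forall h)
    _ ≤ limsup g l + limsup (fun a => (ε a : EReal)) l :=
      EReal.limsup_add_le (by simp [hε']) (by simp [hε'])
    _ = limsup g l := by rw [hε', add_zero]

theorem EReal.exists_le_max_iInf_add {ι : Type*} [Nonempty ι] (f : ι → EReal) (b : ℝ) {ε : ℝ}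
    (hε : 0 < ε) : ∃ i, f i ≤ max (⨅ j, f j) b + ε := by
  rcases eq_top_or_lt_top (⨅ j, f j) with htop | hfin
  · exact ⟨Classical.arbitrary ι, by simp [htop]⟩
  · have hmax_top : max (⨅ j, f j) b ≠ ⊤ := (max_lt hfin (EReal.coe_lt_top b)).ne
    have hmax_bot : max (⨅ j, f j) b ≠ ⊥ :=
      ne_bot_of_le_ne_bot (EReal.coe_ne_bot b) (le_max_right _ _)
    obtain ⟨m, hm⟩ : ∃ m : ℝ, max (⨅ j, f j) b = m :=
      ⟨_, (EReal.coe_toReal hmax_top hmax_bot).symm⟩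
    have hlt : ⨅ j, f j < max (⨅ j, f j) b + ε := by
      refine (le_max_left _ (b : EReal)).trans_lt ?_
      rw [hm]
      exact_mod_cast lt_add_of_pos_right m hε
    obtain ⟨i, hi⟩ := iInf_lt_iff.1 hlt
    exact ⟨i, hi.le⟩

theorem WeaklyConvergesTo.piecewise_range {X : Type*} [NormedAddCommGroup X] [NormedSpace ℝ X]
    {u r : ℕ → X} {φ : ℕ → ℕ} {x₀ : X} [∀ n, Decidable (n ∈ range φ)] (hφ : StrictMono φ)
    (hu : WeaklyConvergesTo (u ∘ φ) x₀) (hr : WeaklyConvergesTo r x₀) :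
    WeaklyConvergesTo ((range φ).piecewise u r) x₀ := by
  intro ψ
  refine (Tendsto.piecewise_range_of_strictMono (u := ψ ∘ u) hφ (hu ψ) (hr ψ)).congr fun n => ?_
  exact (apply_piecewise _ _ _ fun _ => ψ).symm

theorem isBounded_range_of_limsup_lt_top {X : Type*} [PseudoMetricSpace X] {F : ℕ → X → EReal}
    (hcoercive : ∀ r : ℝ, Bornology.IsBounded (⋃ n : ℕ, {x : X | F n x ≤ (r : EReal)}))
    {u : ℕ → X} (hu : limsup (fun n => F n (u n)) atTop < ⊤) :
    Bornology.IsBounded (range u) := by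
  obtain ⟨r, hr, -⟩ := EReal.exists_between_coe_real hu
  obtain ⟨N, hN⟩ := eventually_atTop.1 (eventually_lt_of_limsup_lt hr)
  refine (((finite_Iio N).image u).isBounded.union (hcoercive r)).subset ?_
  rintro _ ⟨n, rfl⟩
  rcases lt_or_ge n N with h | h
  · exact Or.inl ⟨n, h, rfl⟩
  · exact Or.inr (mem_iUnion.2 ⟨n, (hN n h).le⟩)

theorem EReal.exists_seq_limsup_le_limsup_iInf {X : Type*} [Nonempty X] (F : ℕ → X → EReal) :
    ∃ u : ℕ → X, limsup (fun n => F n (u n)) atTop ≤ limsup (fun n => ⨅ x, F n x) atTop := by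
  -- The floor `-n` keeps the bound finite where `F n` is unbounded below.
  choose u hu using fun n : ℕ =>
    EReal.exists_le_max_iInf_add (F n) (-n) (Nat.one_div_pos_of_nat (α := ℝ) (n := n))
  have hfloor : limsup (fun n : ℕ => ((-n : ℝ) : EReal)) atTop = ⊥ :=
    (EReal.tendsto_coe_atBot.comp
      (tendsto_neg_atTop_atBot.comp tendsto_natCast_atTop_atTop)).limsup_eq
  refine ⟨u, ?_⟩
  calc limsup (fun n => F n (u n)) atTop
      ≤ limsup (fun n => max (⨅ x, F n x) ((-n : ℝ) : EReal)) atTop :=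
        EReal.limsup_le_limsup_of_le_add hu tendsto_one_div_add_atTop_nhds_zero_nat
    _ = limsup (fun n => ⨅ x, F n x) atTop := by rw [limsup_max, hfloor, max_bot_right]

namespace GammaConvergesTo

variable {X : Type*} [NormedAddCommGroup X] [NormedSpace ℝ X] {F : ℕ → X → EReal}
  {Flim : X → EReal}

theorem le_liminf_comp (hΓ : GammaConvergesTo F Flim) {u : ℕ → X} {φ : ℕ → ℕ} {x₀ : X}
    (hφ : StrictMono φ) (hu : WeaklyConvergesTo (u ∘ φ) x₀) :
    Flim x₀ ≤ liminf (fun k => F (φ k) (u (φ k))) atTop := by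
  classical
  obtain ⟨r, hr, -⟩ := hΓ.2 x₀
  set w := (range φ).piecewise u r
  calc Flim x₀ ≤ liminf (fun n => F n (w n)) atTop := hΓ.1 x₀ w (hu.piecewise_range hφ hr)
    _ ≤ liminf (fun k => F (φ k) (w (φ k))) atTop :=
      hφ.tendsto_atTop.liminf_le_liminf_comp (u := fun n => F n (w n))
    _ = liminf (fun k => F (φ k) (u (φ k))) atTop := by
      simp only [w, piecewise_eq_of_mem _ _ _ (mem_range_self _)]

theorem limsup_iInf_le (hΓ : GammaConvergesTo F Flim) :
    limsup (fun n => ⨅ z, F n z) atTop ≤ ⨅ y, Flim y := by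
  refine le_iInf fun y => ?_
  obtain ⟨r, -, hr⟩ := hΓ.2 y
  calc limsup (fun n => ⨅ z, F n z) atTop ≤ limsup (fun n => F n (r n)) atTop :=
        limsup_le_limsup (.of_forall fun n => iInf_le _ _)
    _ = Flim y := hr.limsup_eq

theorem exists_subseq_weaklyConvergesTo_minimiser (hΓ : GammaConvergesTo F Flim)
    (hcompact : ∀ x : ℕ → X, Bornology.IsBounded (range x) →
      ∃ (φ : ℕ → ℕ) (x₀ : X), StrictMono φ ∧ WeaklyConvergesTo (x ∘ φ) x₀)
    (hcoercive : ∀ r : ℝ, Bornology.IsBounded (⋃ n : ℕ, {x : X | F n x ≤ (r : EReal)}))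
    (hinf : (⨅ y : X, Flim y) < ⊤) {u : ℕ → X}
    (hu : limsup (fun n => F n (u n)) atTop ≤ ⨅ y : X, Flim y) :
    ∃ (φ : ℕ → ℕ) (x₀ : X), StrictMono φ ∧ WeaklyConvergesTo (u ∘ φ) x₀ ∧
      Flim x₀ = ⨅ y : X, Flim y := by
  obtain ⟨φ, x₀, hφ, hx₀⟩ :=
    hcompact u (isBounded_range_of_limsup_lt_top hcoercive (hu.trans_lt hinf))
  refine ⟨φ, x₀, hφ, hx₀, le_antisymm ?_ (iInf_le _ _)⟩
  calc Flim x₀ ≤ liminf (fun k => F (φ k) (u (φ k))) atTop := hΓ.le_liminf_comp hφ hx₀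
    _ ≤ limsup (fun k => F (φ k) (u (φ k))) atTop := liminf_le_limsup
    _ ≤ limsup (fun n => F n (u n)) atTop :=
      hφ.tendsto_atTop.limsup_comp_le_limsup (u := fun n => F n (u n))
    _ ≤ ⨅ y, Flim y := hu

end GammaConvergesTo

theorem infimum_attained_and_subsequence_converges_to_minimiser_general
    {X : Type*} [NormedAddCommGroup X] [NormedSpace ℝ X]
    (hcompact : ∀ x : ℕ → X, Bornology.IsBounded (Set.range x) →
      ∃ (φ : ℕ → ℕ) (x₀ : X), StrictMono φ ∧ WeaklyConvergesTo (x ∘ φ) x₀)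
    (F : ℕ → X → EReal) (Flim : X → EReal)
    (hGamma : GammaConvergesTo F Flim)
    (hcoercive : ∀ r : ℝ, Bornology.IsBounded (⋃ n : ℕ, {x : X | F n x ≤ (r : EReal)}))
    (hinf : (⨅ y : X, Flim y) < ⊤) :
    (∃ x : X, Flim x = ⨅ y : X, Flim y) ∧
      ∀ (xseq : ℕ → X) (δ : ℕ → ℝ), (∀ n, 0 ≤ δ n) → Tendsto δ atTop (𝓝 0) →
        (∀ n, F n (xseq n) ≤ (⨅ z : X, F n z) + (δ n : EReal)) →
        ∃ (φ : ℕ → ℕ) (x₀ : X), StrictMono φ ∧ WeaklyConvergesTo (xseq ∘ φ) x₀ ∧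
          Flim x₀ = ⨅ y : X, Flim y := by
  have : Nonempty X := not_isEmpty_iff.1 fun _ => by simp at hinf
  constructor
  · obtain ⟨u, hu⟩ := EReal.exists_seq_limsup_le_limsup_iInf F
    obtain ⟨-, x₀, -, -, hx₀⟩ := hGamma.exists_subseq_weaklyConvergesTo_minimiser hcompact
      hcoercive hinf (hu.trans hGamma.limsup_iInf_le)
    exact ⟨x₀, hx₀⟩
  · intro xseq δ _ hδ hquasi
    exact hGamma.exists_subseq_weaklyConvergesTo_minimiser hcompact hcoercive hinf
      ((EReal.limsup_le_limsup_of_le_add hquasi hδ).trans hGamma.limsup_iInf_le)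

theorem infimum_attained_and_subsequence_converges_to_minimiser
    {X : Type*} [NormedAddCommGroup X] [NormedSpace ℝ X]
    (hcompact : ∀ x : ℕ → X, Bornology.IsBounded (Set.range x) →
      ∃ (φ : ℕ → ℕ) (x₀ : X), StrictMono φ ∧ WeaklyConvergesTo (x ∘ φ) x₀)
    (F : ℕ → X → EReal) (Flim : X → EReal)
    (hFne : ∀ n x, F n x ≠ ⊥) (hFlimne : ∀ x, Flim x ≠ ⊥)
    (hGamma : GammaConvergesTo F Flim)
    (hcoercive : ∀ r : ℝ, Bornology.IsBounded (⋃ n : ℕ, {x : X | F n x ≤ (r : EReal)}))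
    (hinf : (⨅ y : X, Flim y) < ⊤) :
    (∃ x : X, Flim x = ⨅ y : X, Flim y) ∧
      ∀ (xseq : ℕ → X) (δ : ℕ → ℝ), (∀ n, 0 ≤ δ n) → Tendsto δ atTop (𝓝 0) →
        (∀ n, F n (xseq n) ≤ (⨅ z : X, F n z) + (δ n : EReal)) →
        ∃ (φ : ℕ → ℕ) (x₀ : X), StrictMono φ ∧ WeaklyConvergesTo (xseq ∘ φ) x₀ ∧
          Flim x₀ = ⨅ y : X, Flim y :=
  infimum_attained_and_subsequence_converges_to_minimiser_general hcompact F Flim hGamma hcoercive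
    hinf
end
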